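/- Let A = {L_0, L_1, …, L_n} be a line arrangement in ℙ²(ℂ) such that every point of multiplicity at least 3 in A lies on the single line L_0 (type C_k with k ≤ 1). Then every rank one local system on the complement M is admissible. -/

import Mathlib

/-!
Pick residues `b j` of the monodromies with real parts in `[0, 1)` and replace `b 0` by
`-∑_{j ≠ 0} b j`; since `∏ λ_j = 1` this is still a residue of `λ_0`, and now the residues sum
to zero. For any set of lines containing `L 0` the sum of these residues is minus a sum of
`b`'s over the complementary lines, so its real part is `≤ 0`. As every point of multiplicity
at least 3 lies on `L 0`, no constrained sum is a positive integer.
-/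

noncomputable section

open Finset Complex

attribute [local instance] Classical.propDecidable

/-- The complex projective plane ℙ²(ℂ). -/
abbrev PP : Type := Projectivization ℂ (Fin 3 → ℂ)

/-- A projective line in ℙ²(ℂ), given as a nonzero linear form up to scalar. -/
abbrev PLine : Type := Projectivization ℂ (Module.Dual ℂ (Fin 3 → ℂ))

/-- Membership of a point on a projective line. -/
def memL (p : PP) (L : PLine) : Prop := L.rep p.rep = 0

/-- A point has multiplicity at least 3 in the arrangement `L`. -/
def multGe3 {N : ℕ} (L : Fin N → PLine) (p : PP) : Prop :=
  3 ≤ (Finset.univ.filter fun j => memL p (L j)).card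

/-- The strictly positive integers, inside ℂ. -/
def PosIntC : Set ℂ := {z | ∃ m : ℤ, 0 < m ∧ z = (m : ℂ)}

/-- The strictly positive integers, inside ℝ. -/
def PosIntR : Set ℝ := {x | ∃ m : ℤ, 0 < m ∧ x = (m : ℝ)}

/-- `a(p)`: the sum of residues over lines through `p`. -/
def aSum {N : ℕ} (L : Fin N → PLine) (a : Fin N → ℂ) (p : PP) : ℂ :=
  ∑ j ∈ Finset.univ.filter (fun j => memL p (L j)), a j

/-- Admissibility of the rank one local system with monodromies `lam`. -/
def Admissible {N : ℕ} (L : Fin N → PLine) (lam : Fin N → ℂˣ) : Prop :=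
  ∃ a : Fin N → ℂ,
    (∀ j, Complex.exp (2 * (Real.pi : ℂ) * Complex.I * a j) = (lam j : ℂ)) ∧
    (∑ j, a j = 0) ∧
    (∀ j, a j ∉ PosIntC) ∧
    (∀ p : PP, multGe3 L p → aSum L a p ∉ PosIntC)

open scoped Real

lemma exists_exp_two_pi_I_mul_eq_of_ne_zero {z : ℂ} (hz : z ≠ 0) :
    ∃ w : ℂ, exp (2 * π * I * w) = z ∧ 0 ≤ w.re ∧ w.re < 1 := by
  set w := log z / (2 * π * I)
  have hw : exp (2 * π * I * w) = z := by
    rw [mul_div_cancel₀ _ (by simp [Real.pi_ne_zero, I_ne_zero]), exp_log hz]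
  refine ⟨w - ⌊w.re⌋, ?_, ?_, ?_⟩
  · rw [mul_sub, exp_sub, hw, mul_comm, exp_int_mul_two_pi_mul_I, div_one]
  · simp
  · simpa using Int.fract_lt_one w.re

lemma notMem_posIntC_of_re_lt_one {z : ℂ} (hz : z.re < 1) : z ∉ PosIntC := by
  rintro ⟨m, hm, rfl⟩
  simp only [intCast_re] at hz
  exact_mod_cast (hz.trans_le (by exact_mod_cast hm : (1 : ℝ) ≤ m)).false

section Balance

variable {ι : Type*} [Fintype ι] [DecidableEq ι]

def balanceAt (b : ι → ℂ) (i : ι) : ι → ℂ :=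
  Function.update b i (-∑ k ∈ univ.erase i, b k)

lemma sum_balanceAt (b : ι → ℂ) (i : ι) : ∑ j, balanceAt b i j = 0 := by
  rw [balanceAt, sum_update_of_mem (mem_univ i), sdiff_singleton_eq_erase, neg_add_cancel]

lemma sum_balanceAt_of_mem (b : ι → ℂ) {i : ι} {S : Finset ι} (hi : i ∈ S) :
    ∑ j ∈ S, balanceAt b i j = -∑ k ∈ Sᶜ, b k := by
  have hcompl : ∑ k ∈ Sᶜ, balanceAt b i k = ∑ k ∈ Sᶜ, b k :=
    sum_congr rfl fun k hk => Function.update_of_ne (by rintro rfl; simp_all) _ _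
  rw [eq_neg_iff_add_eq_zero, ← hcompl, sum_add_sum_compl, sum_balanceAt]

lemma re_sum_balanceAt_nonpos {b : ι → ℂ} (hb : ∀ j, 0 ≤ (b j).re) {i : ι} {S : Finset ι}
    (hi : i ∈ S) : (∑ j ∈ S, balanceAt b i j).re ≤ 0 := by
  rw [sum_balanceAt_of_mem b hi, neg_re, re_sum, neg_nonpos]
  exact sum_nonneg fun k _ => hb k

lemma exp_balanceAt {lam : ι → ℂˣ} (hlam : ∏ j, lam j = 1) {b : ι → ℂ}
    (hb : ∀ j, exp (2 * π * I * b j) = lam j) (i j : ι) :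
    exp (2 * π * I * balanceAt b i j) = lam j := by
  rcases eq_or_ne j i with rfl | hj
  · have hprod : ∏ k ∈ univ.erase j, lam k = (lam j)⁻¹ := by
      rw [prod_erase_eq_div (mem_univ j), hlam, one_div]
    rw [balanceAt, Function.update_self, mul_neg, mul_sum, exp_neg, exp_sum,
      prod_congr rfl fun k _ => hb k, ← Units.coe_prod, hprod, Units.val_inv_eq_inv_val, inv_inv]
  · rw [balanceAt, Function.update_of_ne hj, hb]

end Balance

theorem admissible_of_classC1_general {n : ℕ} (L : Fin (n + 1) → PLine)
    (hcov : ∀ p : PP, multGe3 L p → memL p (L 0))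
    (lam : Fin (n + 1) → ℂˣ) (hlam : ∏ j, lam j = 1) :
    Admissible L lam := by
  choose b hb_exp hb_nonneg hb_lt_one using
    fun j => exists_exp_two_pi_I_mul_eq_of_ne_zero (lam j).ne_zero
  refine ⟨balanceAt b 0, exp_balanceAt hlam hb_exp 0, sum_balanceAt b 0, fun j => ?_,
    fun p hp => ?_⟩
  · apply notMem_posIntC_of_re_lt_one
    rcases eq_or_ne j 0 with rfl | hj
    · simpa using (re_sum_balanceAt_nonpos hb_nonneg (mem_singleton_self 0)).trans_lt one_pos
    · rw [balanceAt, Function.update_of_ne hj]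
      exact hb_lt_one j
  · exact notMem_posIntC_of_re_lt_one <|
      (re_sum_balanceAt_nonpos hb_nonneg (mem_filter.mpr ⟨mem_univ 0, hcov p hp⟩)).trans_lt one_pos

/-- If every point of multiplicity at least 3 of the line arrangement
`A = {L 0, …, L n}` in `ℙ²(ℂ)` lies on the single line `L 0`, then every rank one local
system on the complement is admissible. -/
theorem admissible_of_classC1 {n : ℕ} (L : Fin (n + 1) → PLine)
    (hdist : Function.Injective L)
    (hcov : ∀ p : PP, multGe3 L p → memL p (L 0))
    (lam : Fin (n + 1) → ℂˣ) (hlam : ∏ j, lam j = 1) :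
    Admissible L lam :=
  admissible_of_classC1_general L hcov lam hlam
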